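/- arXiv:1109.0730 — 4 statements merged into one kernel-verified Lean document; each statement's English description precedes it below -/
import Mathlib

section
/- Let Σ be a p×p symmetric positive definite matrix with unit diagonal whose off-diagonal entries are bounded in absolute value by γ, and let T ⊆ {1,…,p} with |T| = k and γ(k−1) < 1. Then for any j ∉ T, the vector Σ_{TT}^{-1} Σ_{Tj} has ℓ₁-norm at most γk/(1 − γ(k−1)). In particular, if γ ≤ ω₀/(2k) for some 0 ≤ ω₀ < 1, this ℓ₁-norm is at most ω₀. -/
/-!
Write `x = Σ_{TT}⁻¹ Σ_{Tj}`, so that `Σ_{TT} x = Σ_{Tj}`. Since `Σ_{TT}` has unit diagonal,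
row `i` of this system gives `x_i = Σ_{ij} - ∑_{t ≠ i} Σ_{it} x_t`, hence
`|x_i| ≤ γ + γ (‖x‖₁ - |x_i|)`. Summing over the `k` rows yields
`‖x‖₁ ≤ γ k + γ (k - 1) ‖x‖₁`, which rearranges to the bound.
-/

open Finset Matrix

namespace Matrix

variable {n : Type*} [Fintype n] [DecidableEq n] {A : Matrix n n ℝ} {x b : n → ℝ} {β γ : ℝ}

theorem abs_apply_le_of_mulVec_eq (hdiag : ∀ i, A i i = 1)
    (hoff : ∀ i j, i ≠ j → |A i j| ≤ γ) (hb : ∀ i, |b i| ≤ β) (hAx : A *ᵥ x = b) (i : n) :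
    |x i| ≤ β + γ * (∑ t, |x t| - |x i|) := by
  have hrow : x i = b i - ∑ t ∈ univ.erase i, A i t * x t := by
    have := congrFun hAx i
    rw [mulVec, dotProduct, ← add_sum_erase _ _ (mem_univ i), hdiag, one_mul] at this
    linarith
  have hoff_sum : ∑ t ∈ univ.erase i, |A i t * x t| ≤ γ * (∑ t, |x t| - |x i|) := by
    rw [← sum_erase_add _ _ (mem_univ i), add_sub_cancel_right, mul_sum]
    refine sum_le_sum fun t ht => ?_
    rw [abs_mul]
    exact mul_le_mul_of_nonneg_right (hoff i t (ne_of_mem_erase ht).symm) (abs_nonneg _)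
  calc |x i| ≤ |b i| + |∑ t ∈ univ.erase i, A i t * x t| := hrow ▸ abs_sub _ _
    _ ≤ β + γ * (∑ t, |x t| - |x i|) :=
      add_le_add (hb i) ((abs_sum_le_sum_abs _ _).trans hoff_sum)

theorem sum_abs_le_of_mulVec_eq (hdiag : ∀ i, A i i = 1)
    (hoff : ∀ i j, i ≠ j → |A i j| ≤ γ) (hb : ∀ i, |b i| ≤ β) (hAx : A *ᵥ x = b)
    (hγ : γ * ((Fintype.card n : ℝ) - 1) < 1) :
    ∑ i, |x i| ≤ β * Fintype.card n / (1 - γ * ((Fintype.card n : ℝ) - 1)) := by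
  have hsum : ∑ i, |x i| ≤ ∑ i, (β + γ * (∑ t, |x t| - |x i|)) :=
    sum_le_sum fun i _ => abs_apply_le_of_mulVec_eq hdiag hoff hb hAx i
  rw [sum_add_distrib, ← mul_sum, sum_sub_distrib, sum_const, sum_const, card_univ,
    nsmul_eq_mul, nsmul_eq_mul] at hsum
  rw [le_div_iff₀ (by linarith)]
  linarith

end Matrix

theorem mul_div_one_sub_le_of_le_div_two_mul {γ ω₀ : ℝ} {k : ℕ} (hγ : 0 ≤ γ) (hω₀ : 0 ≤ ω₀) (hω₁ : ω₀ ≤ 1)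
    (h : γ ≤ ω₀ / (2 * k)) : γ * k / (1 - γ * ((k : ℝ) - 1)) ≤ ω₀ := by
  rcases Nat.eq_zero_or_pos k with rfl | hk
  · simpa using hω₀
  have hγk : γ * k ≤ ω₀ / 2 := by
    rw [le_div_iff₀ (by positivity)] at h
    linarith
  rw [div_le_iff₀ (by nlinarith)]
  nlinarith [mul_le_mul_of_nonneg_left hγk hω₀]

theorem inv_submatrix_mulVec_l1_bound_general {p k : ℕ}
    (M : Matrix (Fin p) (Fin p) ℝ) (γ ω₀ : ℝ)
    (hpd : M.PosDef) (hdiag : ∀ j, M j j = 1)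
    (hγ : ∀ i j, i ≠ j → |M i j| ≤ γ)
    (T : Finset (Fin p)) (hT : T.card = k) (hk : γ * ((k : ℝ) - 1) < 1)
    (j : Fin p) (hj : j ∉ T) :
    (∑ i : T, |((M.submatrix (fun i : T => (i : Fin p)) (fun j : T => (j : Fin p)))⁻¹.mulVec
        (fun i : T => M (i : Fin p) j)) i| ≤ γ * k / (1 - γ * ((k : ℝ) - 1))) ∧
      (γ ≤ ω₀ / (2 * k) → 0 ≤ ω₀ → ω₀ < 1 →
        ∑ i : T, |((M.submatrix (fun i : T => (i : Fin p)) (fun j : T => (j : Fin p)))⁻¹.mulVec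
          (fun i : T => M (i : Fin p) j)) i| ≤ ω₀) := by
  classical
  set A := M.submatrix (fun i : T => (i : Fin p)) (fun j : T => (j : Fin p))
  have hA : IsUnit A.det :=
    A.isUnit_iff_isUnit_det.mp (hpd.submatrix Subtype.val_injective).isUnit
  have hAx : A *ᵥ (A⁻¹ *ᵥ fun i : T => M i j) = fun i : T => M i j := by
    rw [mulVec_mulVec, mul_nonsing_inv A hA, one_mulVec]
  have hcard : (Fintype.card T : ℝ) = k := by rw [Fintype.card_coe, hT]
  have hbound := sum_abs_le_of_mulVec_eq (A := A) (fun i => hdiag i)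
    (fun s t hst => hγ s t (Subtype.coe_injective.ne hst))
    (fun i : T => hγ i j (ne_of_mem_of_not_mem i.2 hj)) hAx (by rwa [hcard])
  rw [hcard] at hbound
  refine ⟨hbound, fun hγω hω₀ hω₁ => hbound.trans ?_⟩
  rcases T.eq_empty_or_nonempty with rfl | ⟨i, hi⟩
  · subst hT
    simpa using hω₀
  exact mul_div_one_sub_le_of_le_div_two_mul ((abs_nonneg _).trans (hγ i j (ne_of_mem_of_not_mem hi hj)))
    hω₀ hω₁.le hγω

/-- (Tropp) Irrepresentable-type bound from incoherence: if `M` is symmetric positive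
definite with unit diagonal and off-diagonal entries bounded by `γ`, `T` has size `k`
with `γ (k-1) < 1`, and `j ∉ T`, then `‖M_{TT}⁻¹ M_{Tj}‖₁ ≤ γ k / (1 - γ (k-1))`;
in particular if moreover `γ ≤ ω₀ / (2 k)` with `0 ≤ ω₀ < 1` then this is at most `ω₀`. -/
theorem inv_submatrix_mulVec_l1_bound {p k : ℕ}
    (M : Matrix (Fin p) (Fin p) ℝ) (γ ω₀ : ℝ)
    (hsym : M.IsSymm) (hpd : M.PosDef) (hdiag : ∀ j, M j j = 1)
    (hγ : ∀ i j, i ≠ j → |M i j| ≤ γ)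
    (T : Finset (Fin p)) (hT : T.card = k) (hk : γ * ((k : ℝ) - 1) < 1)
    (j : Fin p) (hj : j ∉ T) :
    (∑ i : T, |((M.submatrix (fun i : T => (i : Fin p)) (fun j : T => (j : Fin p)))⁻¹.mulVec
        (fun i : T => M (i : Fin p) j)) i| ≤ γ * k / (1 - γ * ((k : ℝ) - 1))) ∧
      (γ ≤ ω₀ / (2 * k) → 0 ≤ ω₀ → ω₀ < 1 →
        ∑ i : T, |((M.submatrix (fun i : T => (i : Fin p)) (fun j : T => (j : Fin p)))⁻¹.mulVec
          (fun i : T => M (i : Fin p) j)) i| ≤ ω₀) :=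
  inv_submatrix_mulVec_l1_bound_general M γ ω₀ hpd hdiag hγ T hT hk j hj
end

section
/- Let Σ be a p×p symmetric positive definite matrix with unit diagonal and off-diagonal entries bounded by γ, and T ⊆ {1,…,p} with |T|=k and γ(k−1) < 1. Then the ℓ∞-to-ℓ∞ operator norm of Σ_{TT}^{-1} (equivalently, the maximum row-wise ℓ₁ norm of Σ_{TT}^{-1}) is at most 1/(1 − γ(k−1)). -/
open Matrix

lemma mul_sign_eq_abs (x : ℝ) : x * Real.sign x = |x| := by
  rcases lt_trichotomy x 0 with h | h | h
  · rw [Real.sign_of_neg h, abs_of_neg h]; ring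
  · simp [h]
  · rw [Real.sign_of_pos h, abs_of_pos h]; ring

/-- Under incoherence, the `ℓ∞→ℓ∞` operator norm of `M_{TT}⁻¹` (the maximum row-wise
`ℓ₁` norm of `M_{TT}⁻¹`) is at most `1 / (1 - γ (k-1))`: if `M` is symmetric positive
definite with unit diagonal and off-diagonal entries bounded by `γ`, and `|T| = k` with
`γ (k-1) < 1`, then every row of `M_{TT}⁻¹` has `ℓ₁` norm at most `1 / (1 - γ (k-1))`. -/
theorem inv_submatrix_linf_opNorm_bound {p k : ℕ}
    (M : Matrix (Fin p) (Fin p) ℝ) (γ : ℝ)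
    (hsym : M.IsSymm) (hpd : M.PosDef) (hdiag : ∀ j, M j j = 1)
    (hγ : ∀ i j, i ≠ j → |M i j| ≤ γ)
    (T : Finset (Fin p)) (hT : T.card = k) (hk : γ * ((k : ℝ) - 1) < 1) :
    ∀ i : T, ∑ j : T,
      |(M.submatrix (fun i : T => (i : Fin p)) (fun j : T => (j : Fin p)))⁻¹ i j| ≤
        1 / (1 - γ * ((k : ℝ) - 1)) := by
  intro i
  set A := M.submatrix (fun i : T => (i : Fin p)) (fun j : T => (j : Fin p)) with hAdef
  have hden : 0 < 1 - γ * ((k : ℝ) - 1) := by linarith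
  by_cases hdet : IsUnit A.det
  swap
  · rw [Matrix.nonsing_inv_apply_not_isUnit A hdet]
    simp only [Matrix.zero_apply, abs_zero, Finset.sum_const_zero]
    positivity
  · have hABone : A * A⁻¹ = 1 := Matrix.mul_nonsing_inv A hdet
    set B := A⁻¹ with hBdef
    set s : T → ℝ := fun l => Real.sign (B i l) with hs
    set u : T → ℝ := Matrix.mulVec B s with hu
    have hui : u i = ∑ j : T, |B i j| := by
      simp only [hu, Matrix.mulVec, dotProduct, hs]
      exact Finset.sum_congr rfl fun j _ => mul_sign_eq_abs _
    have hAu : A *ᵥ u = s := by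
      show Matrix.mulVec A (Matrix.mulVec B s) = s
      rw [Matrix.mulVec_mulVec, hABone, Matrix.one_mulVec]
    -- k ≥ 1
    have hk1 : 1 ≤ k := by
      rw [← hT]
      exact Finset.card_pos.mpr ⟨(i : Fin p), i.2⟩
    have hcardT : Fintype.card T = k := by
      rw [Fintype.card_coe, hT]
    obtain ⟨m, _, hm⟩ := Finset.exists_max_image (Finset.univ : Finset T)
      (fun j => |u j|) ⟨i, Finset.mem_univ i⟩
    have hsm : |s m| ≤ 1 := by
      simp only [hs]
      rcases lt_trichotomy (B i m) 0 with h | h | h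
      · rw [Real.sign_of_neg h]; norm_num
      · simp [h]
      · rw [Real.sign_of_pos h]; norm_num
    have hAmm : A m m = 1 := hdiag _
    have hkey : |u m| ≤ 1 + γ * ((k : ℝ) - 1) * |u m| := by
      have hsum : s m = u m + ∑ j ∈ Finset.univ.erase m, A m j * u j := by
        have := congrFun hAu m
        simp only [Matrix.mulVec, dotProduct] at this
        rw [← this, ← Finset.add_sum_erase _ _ (Finset.mem_univ m), hAmm, one_mul]
      have humeq : u m = s m - ∑ j ∈ Finset.univ.erase m, A m j * u j := by
        linarith
      have hbound : |∑ j ∈ Finset.univ.erase m, A m j * u j| ≤ γ * ((k : ℝ) - 1) * |u m| := by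
        calc |∑ j ∈ Finset.univ.erase m, A m j * u j|
            ≤ ∑ j ∈ Finset.univ.erase m, |A m j * u j| := Finset.abs_sum_le_sum_abs _ _
          _ ≤ ∑ j ∈ Finset.univ.erase m, γ * |u m| := by
              apply Finset.sum_le_sum
              intro j hj
              have hjm : (j : Fin p) ≠ (m : Fin p) := by
                intro hcontra
                exact (Finset.mem_erase.mp hj).1 (Subtype.coe_injective hcontra)
              have h1 : |A m j| ≤ γ := hγ _ _ (Ne.symm hjm)
              rw [abs_mul]
              exact mul_le_mul h1 (hm j (Finset.mem_univ j)) (abs_nonneg _)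
                (le_trans (abs_nonneg _) h1)
          _ = γ * ((k : ℝ) - 1) * |u m| := by
              rw [Finset.sum_const, nsmul_eq_mul]
              have : ((Finset.univ.erase m).card : ℝ) = (k : ℝ) - 1 := by
                rw [Finset.card_erase_of_mem (Finset.mem_univ m), Finset.card_univ, hcardT]
                rw [Nat.cast_sub hk1]
                norm_num
              rw [this]; ring
      calc |u m| = |s m - ∑ j ∈ Finset.univ.erase m, A m j * u j| := by rw [← humeq]
        _ ≤ |s m| + |∑ j ∈ Finset.univ.erase m, A m j * u j| := abs_sub _ _
        _ ≤ 1 + γ * ((k : ℝ) - 1) * |u m| := add_le_add hsm hbound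
    have hUm : |u m| ≤ 1 / (1 - γ * ((k : ℝ) - 1)) := by
      rw [le_div_iff₀ hden]
      nlinarith
    calc ∑ j : T, |B i j| = u i := hui.symm
      _ ≤ |u i| := le_abs_self _
      _ ≤ |u m| := hm i (Finset.mem_univ i)
      _ ≤ 1 / (1 - γ * ((k : ℝ) - 1)) := hUm
end

section
/- Let Σ be a p×p correlation matrix (unit diagonal, symmetric PSD) with max_{j≠j'}|Σ_{jj'}| = γ ≤ ω₀/(2k̄) for some 0 ≤ ω₀ < 1 and integer k̄ ≥ k ≥ 1. Let S ⊆ {1,…,p} with |S| = k, and β ∈ R^p with ‖β_{S^c}‖₁ ≤ σηln, where ln = √((2 log p)/n) and η ≥ 0. Then ‖Σ_{SS}^{-1} Σ_{S S^c} β_{S^c}‖_∞ ≤ σ·ω₀·(η/k̄)·ln. -/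
/-!
A unit diagonal with off-diagonal entries at most `γ` makes `Σ_SS` diagonally dominant: at every
coordinate `|x i| ≤ |(Σ_SS x) i| + γ (k - 1) ‖x‖_∞`, hence `(1 - γ (k - 1)) ‖x‖_∞ ≤ ‖Σ_SS x‖_∞`,
which gives both the invertibility of `Σ_SS` and `|||Σ_SS⁻¹|||_∞ ≤ 1 / (1 - γ (k - 1))`.
Every entry of `Σ_{SSᶜ} β_{Sᶜ}` is at most `γ ‖β_{Sᶜ}‖₁`, and incoherence gives
`γ (k - 1) ≤ ω₀ / 2 < 1 / 2`, so the result is at most `2 γ ‖β_{Sᶜ}‖₁ ≤ (ω₀ / k̄) σ η ln`.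
-/

open Finset Matrix

theorem abs_sum_mul_le_mul_sum_abs {ι : Type*} {T : Finset ι} {a b : ι → ℝ} {γ : ℝ}
    (ha : ∀ j ∈ T, |a j| ≤ γ) : |∑ j ∈ T, a j * b j| ≤ γ * ∑ j ∈ T, |b j| :=
  calc |∑ j ∈ T, a j * b j| ≤ ∑ j ∈ T, |a j| * |b j| := by
        simpa only [abs_mul] using abs_sum_le_sum_abs (fun j => a j * b j) T
    _ ≤ ∑ j ∈ T, γ * |b j| := sum_le_sum fun j hj => by gcongr; exact ha j hj
    _ = γ * ∑ j ∈ T, |b j| := (mul_sum ..).symm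

namespace Matrix

variable {ι : Type*} [Fintype ι] [DecidableEq ι] {A : Matrix ι ι ℝ} {γ : ℝ}

theorem abs_le_abs_mulVec_add_of_unit_diag (hdiag : ∀ i, A i i = 1)
    (hoff : ∀ i j, i ≠ j → |A i j| ≤ γ) (x : ι → ℝ) (i : ι) :
    |x i| ≤ |(A *ᵥ x) i| + γ * (Fintype.card ι - 1) * ‖x‖ := by
  have hsplit : (A *ᵥ x) i = x i + ∑ j ∈ univ.erase i, A i j * x j := by
    rw [mulVec, dotProduct, ← add_sum_erase _ _ (mem_univ i), hdiag, one_mul]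
  have hoffrow : |∑ j ∈ univ.erase i, A i j * x j| ≤ γ * (Fintype.card ι - 1) * ‖x‖ :=
    calc |∑ j ∈ univ.erase i, A i j * x j| ≤ ∑ j ∈ univ.erase i, |A i j| * ‖x‖ := by
          refine (abs_sum_le_sum_abs _ _).trans (sum_le_sum fun j _ => ?_)
          rw [abs_mul]
          exact mul_le_mul_of_nonneg_left (norm_le_pi_norm x j) (abs_nonneg _)
      _ ≤ ∑ j ∈ univ.erase i, γ * ‖x‖ := sum_le_sum fun j hj =>
          mul_le_mul_of_nonneg_right (hoff i j (ne_of_mem_erase hj).symm) (norm_nonneg x)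
      _ = γ * (Fintype.card ι - 1) * ‖x‖ := by
          rw [sum_const, card_erase_of_mem (mem_univ i), card_univ, nsmul_eq_mul,
            Nat.cast_pred (Fintype.card_pos_iff.mpr ⟨i⟩)]
          ring
  calc |x i| = |(A *ᵥ x) i - ∑ j ∈ univ.erase i, A i j * x j| := by
        rw [hsplit, add_sub_cancel_right]
    _ ≤ |(A *ᵥ x) i| + |∑ j ∈ univ.erase i, A i j * x j| := abs_sub _ _
    _ ≤ |(A *ᵥ x) i| + γ * (Fintype.card ι - 1) * ‖x‖ := by gcongr

theorem one_sub_mul_norm_le_norm_mulVec_of_unit_diag (hdiag : ∀ i, A i i = 1)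
    (hoff : ∀ i j, i ≠ j → |A i j| ≤ γ) (x : ι → ℝ) :
    (1 - γ * (Fintype.card ι - 1)) * ‖x‖ ≤ ‖A *ᵥ x‖ := by
  cases isEmpty_or_nonempty ι
  · simp [Subsingleton.elim x 0]
  have : ‖x‖ ≤ ‖A *ᵥ x‖ + γ * (Fintype.card ι - 1) * ‖x‖ :=
    (pi_norm_le_iff_of_nonempty _).mpr fun i =>
      (abs_le_abs_mulVec_add_of_unit_diag hdiag hoff x i).trans
        (by gcongr; exact norm_le_pi_norm (A *ᵥ x) i)
  linarith

theorem isUnit_det_of_unit_diag (hdiag : ∀ i, A i i = 1) (hoff : ∀ i j, i ≠ j → |A i j| ≤ γ)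
    (hγ : γ * (Fintype.card ι - 1) < 1) : IsUnit A.det := by
  rw [isUnit_iff_ne_zero]
  intro hdet
  obtain ⟨x, hx0, hx⟩ := exists_mulVec_eq_zero_iff.mpr hdet
  have := one_sub_mul_norm_le_norm_mulVec_of_unit_diag hdiag hoff x
  rw [hx, norm_zero] at this
  exact hx0 (norm_le_zero_iff.mp (nonpos_of_mul_nonpos_right this (by linarith)))

theorem one_sub_mul_norm_inv_mulVec_le_of_unit_diag (hdiag : ∀ i, A i i = 1)
    (hoff : ∀ i j, i ≠ j → |A i j| ≤ γ) (hγ : γ * (Fintype.card ι - 1) < 1) (y : ι → ℝ) :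
    (1 - γ * (Fintype.card ι - 1)) * ‖A⁻¹ *ᵥ y‖ ≤ ‖y‖ := by
  have := one_sub_mul_norm_le_norm_mulVec_of_unit_diag hdiag hoff (A⁻¹ *ᵥ y)
  rwa [mulVec_mulVec, mul_nonsing_inv _ (isUnit_det_of_unit_diag hdiag hoff hγ),
    one_mulVec] at this

end Matrix

theorem linf_bound_inv_cross_term_general {p n k kbar : ℕ}
    (M : Matrix (Fin p) (Fin p) ℝ) (γ ω₀ σ η : ℝ)
    (hdiag : ∀ j, M j j = 1)
    (hγ : ∀ i j, i ≠ j → |M i j| ≤ γ)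
    (hω₀ : 0 ≤ ω₀) (hω₁ : ω₀ < 1) (hkbar : k ≤ kbar)
    (hcoh : γ ≤ ω₀ / (2 * kbar))
    (S : Finset (Fin p)) (hS : S.card = k) (β : Fin p → ℝ)
    (hβ : ∑ j ∈ Sᶜ, |β j| ≤ σ * η * Real.sqrt (2 * Real.log p / n)) :
    ∀ i : S,
      |((M.submatrix (fun i : S => (i : Fin p)) (fun j : S => (j : Fin p)))⁻¹.mulVec
          (fun i : S => ∑ j ∈ Sᶜ, M (i : Fin p) j * β j)) i| ≤
        σ * ω₀ * (η / kbar) * Real.sqrt (2 * Real.log p / n) := by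
  intro i
  set A := M.submatrix (fun i : S => (i : Fin p)) (fun j : S => (j : Fin p))
  set v : S → ℝ := fun i => ∑ j ∈ Sᶜ, M i j * β j
  set B := ∑ j ∈ Sᶜ, |β j|
  have hcard : (Fintype.card S : ℝ) = k := by rw [Fintype.card_coe, hS]
  have hk : (1 : ℝ) ≤ k := by
    rw [Nat.one_le_cast, ← hS]
    exact card_pos.mpr ⟨i, i.2⟩
  have hkkbar : (k : ℝ) ≤ kbar := by exact_mod_cast hkbar
  have hkbar_pos : (0 : ℝ) < kbar := by linarith
  have hδ : γ * (k - 1) ≤ ω₀ / 2 :=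
    calc γ * (k - 1) ≤ ω₀ / (2 * kbar) * (k - 1) := by gcongr
      _ ≤ ω₀ / (2 * kbar) * kbar := by gcongr; linarith
      _ = ω₀ / 2 := by field_simp
  have hv : ‖v‖ ≤ γ * B := by
    have : Nonempty S := ⟨i⟩
    refine (pi_norm_le_iff_of_nonempty _).mpr fun a => ?_
    exact abs_sum_mul_le_mul_sum_abs fun j hj => hγ _ _ fun h => mem_compl.mp hj (h ▸ a.2)
  have hx := one_sub_mul_norm_inv_mulVec_le_of_unit_diag (A := A) (fun a => hdiag a)
    (fun a b hab => hγ a b (Subtype.coe_ne_coe.mpr hab)) (by rw [hcard]; linarith) v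
  rw [hcard] at hx
  have h2γ : 2 * γ ≤ ω₀ / kbar := by
    have : ω₀ / (2 * kbar) = ω₀ / kbar / 2 := by ring
    linarith
  have hB : 0 ≤ B := sum_nonneg fun _ _ => abs_nonneg _
  calc _ ≤ ‖_‖ := norm_le_pi_norm _ i
    _ ≤ 2 * γ * B := by nlinarith [norm_nonneg v]
    _ ≤ ω₀ / kbar * B := by gcongr
    _ ≤ ω₀ / kbar * (σ * η * Real.sqrt (2 * Real.log p / n)) := by gcongr
    _ = σ * ω₀ * (η / kbar) * Real.sqrt (2 * Real.log p / n) := by ring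

/-- Under incoherence `γ(Σ) ≤ ω₀ / (2 k̄)` (with `0 ≤ ω₀ < 1`, `k̄ ≥ k ≥ 1`) for a
correlation matrix `M`, a subset `S` of size `k`, and `β` with `‖β_{Sᶜ}‖₁ ≤ σ η ln`
where `ln = √((2 log p)/n)`, one has `‖M_{SS}⁻¹ M_{S Sᶜ} β_{Sᶜ}‖_∞ ≤ σ ω₀ (η/k̄) ln`. -/
theorem linf_bound_inv_cross_term {p n k kbar : ℕ}
    (M : Matrix (Fin p) (Fin p) ℝ) (γ ω₀ σ η : ℝ)
    (hsym : M.IsSymm) (hpsd : M.PosSemidef) (hdiag : ∀ j, M j j = 1)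
    (hγ : ∀ i j, i ≠ j → |M i j| ≤ γ)
    (hω₀ : 0 ≤ ω₀) (hω₁ : ω₀ < 1) (hk : 1 ≤ k) (hkbar : k ≤ kbar)
    (hcoh : γ ≤ ω₀ / (2 * kbar)) (hη : 0 ≤ η)
    (S : Finset (Fin p)) (hS : S.card = k) (β : Fin p → ℝ)
    (hβ : ∑ j ∈ Sᶜ, |β j| ≤ σ * η * Real.sqrt (2 * Real.log p / n)) :
    ∀ i : S,
      |((M.submatrix (fun i : S => (i : Fin p)) (fun j : S => (j : Fin p)))⁻¹.mulVec
          (fun i : S => ∑ j ∈ Sᶜ, M (i : Fin p) j * β j)) i| ≤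
        σ * ω₀ * (η / kbar) * Real.sqrt (2 * Real.log p / n) :=
  linf_bound_inv_cross_term_general M γ ω₀ σ η hdiag hγ hω₀ hω₁ hkbar hcoh S hS β hβ
end

section
/- Under the assumptions: Σ a p×p correlation matrix with coherence γ ≤ ω₀/(2k̄) (0 ≤ ω₀ < 1, k̄ ≥ k ≥ 1), S ⊆ {1,…,p} with |S| = k, β ∈ R^p with ‖β_{S^c}‖_∞ ≤ σν·ln and ‖β_{S^c}‖₁ ≤ ση·ln where ln = √((2 log p)/n), the conditional covariance action satisfies ‖Σ_{S^c|S} β_{S^c}‖_∞ ≤ σ(ν + ω₀·η/k̄)·ln, where Σ_{S^c|S} = Σ_{S^cS^c} − Σ_{S^cS} Σ_{SS}^{-1} Σ_{SS^c}. -/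
/-!
Write `M_{Sᶜ|S} x = M_{SᶜSᶜ} x - M_{SᶜS} w` with `x = β_{Sᶜ}` and `w = M_{SS}⁻¹ M_{SSᶜ} x`.
Unit diagonal and off-diagonal entries at most `γ` give `|(M_{SᶜSᶜ} x)_i| ≤ |x_i| + γ ‖x‖₁`
and `‖M_{SSᶜ} x‖_∞ ≤ γ ‖x‖₁`. Since `|S| γ ≤ 1/2`, the block `M_{SS}` is `I + E` with
`‖E‖_∞ ≤ 1/2`, so `‖w‖_∞ ≤ 2 γ ‖x‖₁`; the rows of `M_{SᶜS}` have `ℓ₁`-norm at most `|S| γ`,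
so the second term is at most `|S| γ · 2 γ ‖x‖₁ ≤ γ ‖x‖₁`. Altogether the action is bounded
by `|x_i| + 2 γ ‖x‖₁`, and the incoherence condition gives `2 γ ≤ ω₀ / k̄`.
-/

open Finset

namespace Matrix

section MulVec

variable {m n : Type*} [Fintype n]

theorem abs_mulVec_apply_le_sum (A : Matrix m n ℝ) (x : n → ℝ) (i : m) :
    |(A *ᵥ x) i| ≤ ∑ j, |A i j| * |x j| := by
  simpa only [mulVec, dotProduct, abs_mul] using abs_sum_le_sum_abs (fun j => A i j * x j) univ

theorem abs_mulVec_apply_le_mul_sum_abs (A : Matrix m n ℝ) (x : n → ℝ) {i : m} {c : ℝ}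
    (hA : ∀ j, |A i j| ≤ c) : |(A *ᵥ x) i| ≤ c * ∑ j, |x j| :=
  calc |(A *ᵥ x) i| ≤ ∑ j, |A i j| * |x j| := abs_mulVec_apply_le_sum A x i
    _ ≤ ∑ j, c * |x j| := by gcongr with j; exact hA j
    _ = c * ∑ j, |x j| := (mul_sum _ _ _).symm

theorem abs_mulVec_apply_le_sum_mul_norm (A : Matrix m n ℝ) (x : n → ℝ) (i : m) :
    |(A *ᵥ x) i| ≤ (∑ j, |A i j|) * ‖x‖ :=
  calc |(A *ᵥ x) i| ≤ ∑ j, |A i j| * |x j| := abs_mulVec_apply_le_sum A x i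
    _ ≤ ∑ j, |A i j| * ‖x‖ := by gcongr with j; exact norm_le_pi_norm x j
    _ = (∑ j, |A i j|) * ‖x‖ := (sum_mul _ _ _).symm

end MulVec

section UnitDiagonal

variable {n : Type*} [Fintype n] [DecidableEq n]

theorem abs_mulVec_apply_le_of_diag_eq_one (A : Matrix n n ℝ) (x : n → ℝ) {i : n} {c : ℝ}
    (hc : 0 ≤ c) (hdiag : A i i = 1) (hoff : ∀ j, j ≠ i → |A i j| ≤ c) :
    |(A *ᵥ x) i| ≤ |x i| + c * ∑ j, |x j| := by
  have hsplit : (A *ᵥ x) i = x i + ((A - 1) *ᵥ x) i := by simp [sub_mulVec]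
  have hentry : ∀ j, |(A - 1) i j| ≤ c := by
    intro j
    rcases eq_or_ne j i with rfl | hj
    · simpa [hdiag] using hc
    · simpa [one_apply_ne' hj] using hoff j hj
  rw [hsplit]
  exact (abs_add_le _ _).trans (add_le_add le_rfl (abs_mulVec_apply_le_mul_sum_abs _ x hentry))

theorem one_sub_mul_norm_le_norm_mulVec (C : Matrix n n ℝ) (hdiag : ∀ s, C s s = 1) {r : ℝ}
    (hrow : ∀ s, ∑ t ∈ univ.erase s, |C s t| ≤ r) (u : n → ℝ) :
    (1 - r) * ‖u‖ ≤ ‖C *ᵥ u‖ := by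
  have hpoint : ∀ s, |u s| ≤ ‖C *ᵥ u‖ + r * ‖u‖ := by
    intro s
    have hsplit : u s = (C *ᵥ u) s - ((C - 1) *ᵥ u) s := by simp [sub_mulVec]
    have hrow' : ∑ t, |(C - 1) s t| ≤ r := by
      rw [← add_sum_erase _ _ (mem_univ s), sub_apply, one_apply_eq, hdiag, sub_self, abs_zero,
        zero_add]
      refine (sum_congr rfl fun t ht => ?_).trans_le (hrow s)
      rw [sub_apply, one_apply_ne' (ne_of_mem_erase ht), sub_zero]
    calc |u s| ≤ |(C *ᵥ u) s| + |((C - 1) *ᵥ u) s| := hsplit ▸ abs_sub _ _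
      _ ≤ ‖C *ᵥ u‖ + r * ‖u‖ := add_le_add (norm_le_pi_norm (C *ᵥ u) s)
          ((abs_mulVec_apply_le_sum_mul_norm _ u s).trans
            (mul_le_mul_of_nonneg_right hrow' (norm_nonneg u)))
  rcases isEmpty_or_nonempty n with _ | _
  · simp [Subsingleton.elim u 0]
  · have := (pi_norm_le_iff_of_nonempty u).2 hpoint
    linarith

theorem norm_inv_mulVec_le (C : Matrix n n ℝ) (hdiag : ∀ s, C s s = 1) {r : ℝ}
    (hrow : ∀ s, ∑ t ∈ univ.erase s, |C s t| ≤ r) (hr : r < 1) (v : n → ℝ) :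
    ‖C⁻¹ *ᵥ v‖ ≤ ‖v‖ / (1 - r) := by
  have hdet : IsUnit C.det := isUnit_iff_ne_zero.2 <| det_ne_zero_of_sum_row_lt_diag fun s => by
    simpa [hdiag] using (hrow s).trans_lt hr
  rw [le_div_iff₀ (sub_pos.2 hr), mul_comm]
  simpa [mulVec_mulVec, mul_nonsing_inv C hdet] using
    one_sub_mul_norm_le_norm_mulVec C hdiag hrow (C⁻¹ *ᵥ v)

end UnitDiagonal

section SchurComplement

variable {ι : Type*} [Fintype ι] [DecidableEq ι]

noncomputable def schurCompl {R : Type*} [CommRing R] (M : Matrix ι ι R) (S : Finset ι) :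
    Matrix ↥(Sᶜ) ↥(Sᶜ) R :=
  M.submatrix (↑) (↑) -
    M.submatrix (↑) ((↑) : S → ι) * (M.submatrix ((↑) : S → ι) ((↑) : S → ι))⁻¹ *
      M.submatrix ((↑) : S → ι) (↑)

theorem abs_schurCompl_mulVec_apply_le (M : Matrix ι ι ℝ) (S : Finset ι) {γ : ℝ}
    (hdiag : ∀ j, M j j = 1) (hγ : ∀ i j, i ≠ j → |M i j| ≤ γ) (hγ0 : 0 ≤ γ)
    (hSγ : S.card * γ ≤ 1 / 2) (x : ↥(Sᶜ) → ℝ) (i : ↥(Sᶜ)) :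
    |(schurCompl M S *ᵥ x) i| ≤ |x i| + 2 * γ * ∑ j, |x j| := by
  set A : Matrix ↥(Sᶜ) ↥(Sᶜ) ℝ := M.submatrix (↑) (↑)
  set B : Matrix ↥(Sᶜ) S ℝ := M.submatrix (↑) (↑)
  set C : Matrix S S ℝ := M.submatrix (↑) (↑)
  set D : Matrix S ↥(Sᶜ) ℝ := M.submatrix (↑) (↑)
  set w := C⁻¹ *ᵥ (D *ᵥ x)
  set L := ∑ j, |x j|
  have hne : ∀ (s : S) (j : ↥(Sᶜ)), (s : ι) ≠ j := fun s j h =>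
    mem_compl.1 j.2 (h ▸ s.2)
  have hsplit : (schurCompl M S *ᵥ x) i = (A *ᵥ x) i - (B *ᵥ w) i := by
    simp [schurCompl, A, B, C, D, w, sub_mulVec, mulVec_mulVec, Matrix.mul_assoc]
  have hAx : |(A *ᵥ x) i| ≤ |x i| + γ * L :=
    abs_mulVec_apply_le_of_diag_eq_one A x hγ0 (hdiag i) fun j hj =>
      hγ _ _ (Subtype.coe_injective.ne hj.symm)
  have hDx : ‖D *ᵥ x‖ ≤ γ * L :=
    (pi_norm_le_iff_of_nonneg (by positivity)).2 fun s =>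
      abs_mulVec_apply_le_mul_sum_abs D x fun j => hγ _ _ (hne s j)
  have hCrow : ∀ s, ∑ t ∈ univ.erase s, |C s t| ≤ 1 / 2 := fun s =>
    calc ∑ t ∈ univ.erase s, |C s t| ≤ ∑ _t ∈ univ.erase s, γ :=
          sum_le_sum fun t ht => hγ _ _ (Subtype.coe_injective.ne (ne_of_mem_erase ht).symm)
      _ ≤ S.card * γ := by
          rw [sum_const, nsmul_eq_mul]
          gcongr
          simp
      _ ≤ 1 / 2 := hSγ
  have hw : ‖w‖ ≤ 2 * (γ * L) :=
    calc ‖w‖ ≤ ‖D *ᵥ x‖ / (1 - 1 / 2) :=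
          norm_inv_mulVec_le C (fun s => hdiag s) hCrow (by norm_num) (D *ᵥ x)
      _ = 2 * ‖D *ᵥ x‖ := by ring
      _ ≤ 2 * (γ * L) := by gcongr
  have hBw : |(B *ᵥ w) i| ≤ S.card * γ * ‖w‖ := by
    refine (abs_mulVec_apply_le_sum_mul_norm B w i).trans
      (mul_le_mul_of_nonneg_right ?_ (norm_nonneg w))
    calc ∑ s, |B i s| ≤ ∑ _s : S, γ := sum_le_sum fun s _ => hγ _ _ (hne s i).symm
      _ = S.card * γ := by simp
  rw [hsplit]
  calc |(A *ᵥ x) i - (B *ᵥ w) i| ≤ |(A *ᵥ x) i| + |(B *ᵥ w) i| := abs_sub _ _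
    _ ≤ |x i| + γ * L + 1 / 2 * (2 * (γ * L)) := by
        gcongr
        exact hBw.trans (mul_le_mul hSγ hw (norm_nonneg w) (by norm_num))
    _ = |x i| + 2 * γ * L := by ring

end SchurComplement

end Matrix

theorem linf_bound_schur_complement_action_general {p n k kbar : ℕ}
    (M : Matrix (Fin p) (Fin p) ℝ) (γ ω₀ σ η ν : ℝ)
    (hdiag : ∀ j, M j j = 1)
    (hγ : ∀ i j, i ≠ j → |M i j| ≤ γ)
    (hω₁ : ω₀ < 1) (hk : 1 ≤ k) (hkbar : k ≤ kbar)
    (hcoh : γ ≤ ω₀ / (2 * kbar))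
    (S : Finset (Fin p)) (hS : S.card = k) (β : Fin p → ℝ)
    (hβ1 : ∑ j ∈ Sᶜ, |β j| ≤ σ * η * Real.sqrt (2 * Real.log p / n))
    (hβinf : ∀ j ∈ Sᶜ, |β j| ≤ σ * ν * Real.sqrt (2 * Real.log p / n)) :
    ∀ i : ↥(Sᶜ : Finset (Fin p)),
      |((M.submatrix (fun i : ↥(Sᶜ : Finset (Fin p)) => (i : Fin p))
            (fun j : ↥(Sᶜ : Finset (Fin p)) => (j : Fin p)) -
          M.submatrix (fun i : ↥(Sᶜ : Finset (Fin p)) => (i : Fin p))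
            (fun j : S => (j : Fin p)) *
          (M.submatrix (fun i : S => (i : Fin p)) (fun j : S => (j : Fin p)))⁻¹ *
          M.submatrix (fun i : S => (i : Fin p))
            (fun j : ↥(Sᶜ : Finset (Fin p)) => (j : Fin p))).mulVec
          (fun j : ↥(Sᶜ : Finset (Fin p)) => β (j : Fin p))) i| ≤
        σ * (ν + ω₀ * η / kbar) * Real.sqrt (2 * Real.log p / n) := by
  intro i
  obtain ⟨s, hs⟩ := card_pos.1 (hS ▸ hk : 0 < S.card)
  have hγ0 : 0 ≤ γ := (abs_nonneg _).trans (hγ i s fun h => mem_compl.1 i.2 (h ▸ hs))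
  have hkbar0 : (0 : ℝ) < kbar := by exact_mod_cast hk.trans hkbar
  have hcoh' : 2 * kbar * γ ≤ ω₀ := by rwa [le_div_iff₀ (by positivity), mul_comm] at hcoh
  have h2γ : 2 * γ ≤ ω₀ / kbar := by rw [le_div_iff₀ hkbar0]; linarith
  have hSγ : (S.card : ℝ) * γ ≤ 1 / 2 := by
    have hkkbar : (S.card : ℝ) ≤ kbar := by exact_mod_cast hS ▸ hkbar
    nlinarith [mul_le_mul_of_nonneg_right hkkbar hγ0]
  have hsum : ∑ j : ↥(Sᶜ), |β j| ≤ σ * η * Real.sqrt (2 * Real.log p / n) :=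
    (sum_coe_sort Sᶜ fun j => |β j|).trans_le hβ1
  calc _ ≤ |β i| + 2 * γ * ∑ j : ↥(Sᶜ), |β j| :=
        Matrix.abs_schurCompl_mulVec_apply_le M S hdiag hγ hγ0 hSγ (fun j => β j) i
    _ ≤ σ * ν * Real.sqrt (2 * Real.log p / n) +
          ω₀ / kbar * (σ * η * Real.sqrt (2 * Real.log p / n)) := by
        gcongr
        · exact hβinf i i.2
        · exact (mul_nonneg zero_le_two hγ0).trans h2γ
    _ = σ * (ν + ω₀ * η / kbar) * Real.sqrt (2 * Real.log p / n) := by ring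

/-- Under incoherence `γ(Σ) ≤ ω₀ / (2 k̄)` (`0 ≤ ω₀ < 1`, `k̄ ≥ k ≥ 1`), `|S| = k`,
`‖β_{Sᶜ}‖_∞ ≤ σ ν ln` and `‖β_{Sᶜ}‖₁ ≤ σ η ln` with `ln = √((2 log p)/n)`, the Schur
complement `M_{Sᶜ|S} = M_{SᶜSᶜ} − M_{SᶜS} M_{SS}⁻¹ M_{SSᶜ}` satisfies
`‖M_{Sᶜ|S} β_{Sᶜ}‖_∞ ≤ σ (ν + ω₀ η / k̄) ln`. -/
theorem linf_bound_schur_complement_action {p n k kbar : ℕ}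
    (M : Matrix (Fin p) (Fin p) ℝ) (γ ω₀ σ η ν : ℝ)
    (hsym : M.IsSymm) (hpsd : M.PosSemidef) (hdiag : ∀ j, M j j = 1)
    (hγ : ∀ i j, i ≠ j → |M i j| ≤ γ)
    (hω₀ : 0 ≤ ω₀) (hω₁ : ω₀ < 1) (hk : 1 ≤ k) (hkbar : k ≤ kbar)
    (hcoh : γ ≤ ω₀ / (2 * kbar)) (hη : 0 ≤ η) (hν : 0 ≤ ν)
    (S : Finset (Fin p)) (hS : S.card = k) (β : Fin p → ℝ)
    (hβ1 : ∑ j ∈ Sᶜ, |β j| ≤ σ * η * Real.sqrt (2 * Real.log p / n))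
    (hβinf : ∀ j ∈ Sᶜ, |β j| ≤ σ * ν * Real.sqrt (2 * Real.log p / n)) :
    ∀ i : ↥(Sᶜ : Finset (Fin p)),
      |((M.submatrix (fun i : ↥(Sᶜ : Finset (Fin p)) => (i : Fin p))
            (fun j : ↥(Sᶜ : Finset (Fin p)) => (j : Fin p)) -
          M.submatrix (fun i : ↥(Sᶜ : Finset (Fin p)) => (i : Fin p))
            (fun j : S => (j : Fin p)) *
          (M.submatrix (fun i : S => (i : Fin p)) (fun j : S => (j : Fin p)))⁻¹ *
          M.submatrix (fun i : S => (i : Fin p))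
            (fun j : ↥(Sᶜ : Finset (Fin p)) => (j : Fin p))).mulVec
          (fun j : ↥(Sᶜ : Finset (Fin p)) => β (j : Fin p))) i| ≤
        σ * (ν + ω₀ * η / kbar) * Real.sqrt (2 * Real.log p / n) :=
  linf_bound_schur_complement_action_general M γ ω₀ σ η ν hdiag hγ hω₁ hk hkbar hcoh S hS β hβ1
    hβinf
end
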